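/- Let H be obtained from a graph G with vertex set {v_1,…,v_k} by expanding each vertex v_i by a module M_i = (V_i, E_i). Let S be a minimal separator of H and suppose some V_i intersects S but is not contained in S. Then V_i intersects every full component of H − S associated to S; in particular, S ∩ V_i is a minimal separator of M_i and S \ V_i = N_H(V_i). -/

import Mathlib

open SimpleGraph

universe u

/-- Reachability in `G − S`: there is a walk whose support avoids `S`. -/
def AvoidReach {V : Type u} (G : SimpleGraph V) (S : Set V) (u v : V) : Prop :=
  ∃ w : G.Walk u v, ∀ x ∈ w.support, x ∉ S

/-- `S` is a `u,v`-separator of `G`: `u, v ∉ S` and `u,v` lie in different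
connected components of `G − S`. -/
def IsSep {V : Type u} (G : SimpleGraph V) (S : Set V) (u v : V) : Prop :=
  u ∉ S ∧ v ∉ S ∧ ¬ AvoidReach G S u v

/-- `S` is a minimal `u,v`-separator of `G`. -/
def IsMinSep {V : Type u} (G : SimpleGraph V) (S : Set V) (u v : V) : Prop :=
  IsSep G S u v ∧ ∀ T ⊂ S, ¬ IsSep G T u v

/-- `S` is a minimal separator of `G`. -/
def IsMinimalSeparator {V : Type u} (G : SimpleGraph V) (S : Set V) : Prop :=
  ∃ u v, IsMinSep G S u v

/-- `C` is a connected component of `G − S`. -/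
def IsCompOf {V : Type u} (G : SimpleGraph V) (S C : Set V) : Prop :=
  ∃ v, v ∉ S ∧ C = {x | AvoidReach G S v x}

/-- The neighbourhood of a vertex set `A`: vertices outside `A` with a neighbour in `A`. -/
def setNbhd {V : Type u} (G : SimpleGraph V) (A : Set V) : Set V :=
  {x | x ∉ A ∧ ∃ a ∈ A, G.Adj x a}

/-- `C` is a full component of `G − S` associated to `S`, i.e. `N(C) = S`. -/
def IsFullCompOf {V : Type u} (G : SimpleGraph V) (S C : Set V) : Prop :=
  IsCompOf G S C ∧ setNbhd G C = S

/-- `W` is a vertex cover of `G`. -/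
def IsVC {V : Type u} (G : SimpleGraph V) (W : Set V) : Prop :=
  ∀ ⦃a b⦄, G.Adj a b → a ∈ W ∨ b ∈ W

/-- The vertex cover number `vc(G)`. -/
noncomputable def vcNum {V : Type u} (G : SimpleGraph V) : ℕ :=
  sInf {n | ∃ W : Set V, IsVC G W ∧ W.ncard = n}

/-- A graph is chordal if every cycle on four or more vertices has a chord, i.e. an
edge of the graph between two vertices of the cycle that is not an edge of the cycle. -/
def IsChordalG {V : Type u} (G : SimpleGraph V) : Prop :=
  ∀ (v : V) (w : G.Walk v v), w.IsCycle → 4 ≤ w.length →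
    ∃ x ∈ w.support, ∃ y ∈ w.support, G.Adj x y ∧ s(x, y) ∉ w.edges

/-- `H` is a minimal triangulation of `G`: a chordal supergraph of `G` such that no graph
strictly between `G` and `H` is chordal. -/
def IsMinimalTriangulation {V : Type u} (G H : SimpleGraph V) : Prop :=
  G ≤ H ∧ IsChordalG H ∧ ∀ F : SimpleGraph V, G ≤ F → F < H → ¬ IsChordalG F

/-- `Ω` is a maximal clique of `H`. -/
def IsMaxClique {V : Type u} (H : SimpleGraph V) (Ω : Set V) : Prop :=
  H.IsClique Ω ∧ ∀ t : Set V, H.IsClique t → Ω ⊆ t → t = Ω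

/-- `Ω` is a potential maximal clique of `G`: a maximal clique of some
minimal triangulation of `G`. -/
def IsPMC {V : Type u} (G : SimpleGraph V) (Ω : Set V) : Prop :=
  ∃ H : SimpleGraph V, IsMinimalTriangulation G H ∧ IsMaxClique H Ω

/-- The graph `H` obtained from `G` (with vertex set `{v_1, …, v_k} = Fin k`) by expanding
each vertex `i` by the module `M i`: the vertex set is the disjoint union `Σ i, V i`;
within each `V i` the edges are those of `M i`, and `a ∈ V i` is adjacent to `b ∈ V j`
(`i ≠ j`) iff `i` and `j` are adjacent in `G`. -/
def expandG {k : ℕ} {V : Fin k → Type u} (G : SimpleGraph (Fin k))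
    (M : ∀ i, SimpleGraph (V i)) : SimpleGraph (Σ i, V i) :=
  SimpleGraph.fromRel (fun a b =>
    (∃ h : a.1 = b.1, (M b.1).Adj (h ▸ a.2) b.2) ∨ (a.1 ≠ b.1 ∧ G.Adj a.1 b.1))

/-- The set of vertices of the expanded graph coming from the module `M i`,
i.e. the copy of `V i`. -/
def modSet {k : ℕ} {V : Fin k → Type u} (i : Fin k) : Set (Σ i, V i) := {x | x.1 = i}

/-! Since `s₀ ∈ S ∩ V i` is needed to separate `u` from `v`, it has neighbours `c`, `d` in
the components of `u` and `v`. If some vertex `x ∉ S` saw the module, then `c` and `d`, being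
adjacent to `s₀ ∈ V i`, would both reach a vertex `p ∈ V i \ S` (directly if they lie outside
the module, through `x` otherwise), joining `u` to `v`. Hence `N(V i) ⊆ S`: walks of `H − S`
starting in `V i` never leave it, so they are walks of `M i`, and the minimality of `S` transfers
to `S ∩ V i`. -/

namespace AvoidReach

variable {W : Type u} {G : SimpleGraph W} {S T : Set W} {a b c : W}

lemma refl (ha : a ∉ S) : AvoidReach G S a a := ⟨Walk.nil, by simpa⟩

lemma symm (h : AvoidReach G S a b) : AvoidReach G S b a := by
  obtain ⟨w, hw⟩ := h
  exact ⟨w.reverse, by simpa using hw⟩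

lemma trans (h₁ : AvoidReach G S a b) (h₂ : AvoidReach G S b c) : AvoidReach G S a c := by
  obtain ⟨w₁, hw₁⟩ := h₁
  obtain ⟨w₂, hw₂⟩ := h₂
  refine ⟨w₁.append w₂, fun x hx => ?_⟩
  rcases (Walk.mem_support_append_iff _ _).1 hx with hx | hx
  exacts [hw₁ x hx, hw₂ x hx]

lemma of_adj (h : G.Adj a b) (ha : a ∉ S) (hb : b ∉ S) : AvoidReach G S a b :=
  ⟨h.toWalk, by simp [ha, hb]⟩

lemma left_notMem (h : AvoidReach G S a b) : a ∉ S := by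
  obtain ⟨w, hw⟩ := h
  exact hw a w.start_mem_support

lemma right_notMem (h : AvoidReach G S a b) : b ∉ S :=
  h.symm.left_notMem

lemma mono (hTS : T ⊆ S) (h : AvoidReach G S a b) : AvoidReach G T a b := by
  obtain ⟨w, hw⟩ := h
  exact ⟨w, fun x hx hxT => hw x hx (hTS hxT)⟩

end AvoidReach

section Neighbourhood

variable {W : Type u} {G : SimpleGraph W} {A Q : Set W} {a b : W}

lemma mem_of_adj_of_setNbhd_subset (hAQ : setNbhd G A ⊆ Q) (hab : G.Adj a b) (hb : b ∈ A)
    (ha : a ∉ Q) : a ∈ A := by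
  by_contra haA
  exact ha (hAQ ⟨haA, b, hb, hab⟩)

lemma AvoidReach.mem_of_setNbhd_subset (hAQ : setNbhd G A ⊆ Q) (h : AvoidReach G Q a b)
    (ha : a ∈ A) : b ∈ A := by
  obtain ⟨w, hw⟩ := h
  induction w with
  | nil => exact ha
  | cons hadj w ih =>
    exact ih (mem_of_adj_of_setNbhd_subset hAQ hadj.symm ha (hw _ (by simp)))
      fun z hz => hw z (by simp [hz])

end Neighbourhood

section MinimalSeparator

variable {W : Type u} {G : SimpleGraph W} {S : Set W} {u v x : W}

lemma IsSep.symm (h : IsSep G S u v) : IsSep G S v u :=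
  ⟨h.2.1, h.1, fun h' => h.2.2 h'.symm⟩

lemma IsMinSep.symm (h : IsMinSep G S u v) : IsMinSep G S v u :=
  ⟨h.1.symm, fun T hT hsep => h.2 T hT hsep.symm⟩

lemma exists_adj_of_walk_avoiding_sdiff_singleton {a b : W} (w : G.Walk a b)
    (hw : ∀ z ∈ w.support, z ∉ S \ {x}) (ha : a ∉ S) (hab : ¬ AvoidReach G S a b) :
    ∃ c, AvoidReach G S a c ∧ G.Adj c x := by
  induction w with
  | nil => exact absurd (AvoidReach.refl ha) hab
  | @cons a y b hadj w ih =>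
    by_cases hyx : y = x
    · exact ⟨a, AvoidReach.refl ha, hyx ▸ hadj⟩
    have hy : y ∉ S := fun hyS => hw y (by simp) ⟨hyS, hyx⟩
    have hyb : ¬ AvoidReach G S y b := fun h => hab ((AvoidReach.of_adj hadj ha hy).trans h)
    obtain ⟨c, hyc, hcx⟩ := ih (fun z hz => hw z (by simp [hz])) hy hyb
    exact ⟨c, (AvoidReach.of_adj hadj ha hy).trans hyc, hcx⟩

lemma IsMinSep.exists_adj_of_mem (h : IsMinSep G S u v) (hx : x ∈ S) :
    ∃ c, AvoidReach G S u c ∧ G.Adj c x := by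
  have hsub : S \ {x} ⊂ S := Set.sdiff_singleton_ssubset.2 hx
  obtain ⟨hu, hv, huv⟩ := h.1
  have hreach : AvoidReach G (S \ {x}) u v := by
    by_contra hne
    exact h.2 _ hsub ⟨fun h => hu h.1, fun h => hv h.1, hne⟩
  obtain ⟨w, hw⟩ := hreach
  exact exists_adj_of_walk_avoiding_sdiff_singleton w hw hu huv

end MinimalSeparator

section Expand

variable {k : ℕ} {V : Fin k → Type u} {G : SimpleGraph (Fin k)} {M : ∀ i, SimpleGraph (V i)}

lemma expandG_adj_mk_mk {i : Fin k} {x y : V i} :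
    (expandG G M).Adj ⟨i, x⟩ ⟨i, y⟩ ↔ (M i).Adj x y := by
  rw [expandG, fromRel_adj]
  constructor
  · rintro ⟨-, (⟨_, h⟩ | ⟨h, -⟩) | (⟨_, h⟩ | ⟨h, -⟩)⟩
    exacts [h, absurd rfl h, h.symm, absurd rfl h]
  · exact fun h => ⟨by simp [h.ne], Or.inl (Or.inl ⟨rfl, h⟩)⟩

lemma expandG_adj_of_fst_ne {a b : Σ j, V j} (hne : a.1 ≠ b.1) :
    (expandG G M).Adj a b ↔ G.Adj a.1 b.1 := by
  rw [expandG, fromRel_adj]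
  constructor
  · rintro ⟨-, (⟨h, -⟩ | ⟨-, h⟩) | (⟨h, -⟩ | ⟨-, h⟩)⟩
    exacts [absurd h hne, h, absurd h.symm hne, h.symm]
  · exact fun h => ⟨fun he => hne (congrArg Sigma.fst he), Or.inl (Or.inr ⟨hne, h⟩)⟩

lemma expandG_adj_of_adj_of_mem_modSet {i : Fin k} {a b b' : Σ j, V j} (ha : a ∉ modSet i)
    (hb : b ∈ modSet i) (hb' : b' ∈ modSet i) (hab : (expandG G M).Adj a b) :
    (expandG G M).Adj a b' := by
  have hne : a.1 ≠ i := ha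
  rw [expandG_adj_of_fst_ne (hb.symm ▸ hne)] at hab
  rw [expandG_adj_of_fst_ne (hb'.symm ▸ hne), hb']
  rwa [hb] at hab

lemma AvoidReach.expandG_mk {i : Fin k} {S : Set (Σ j, V j)} {x y : V i}
    (h : AvoidReach (M i) (Sigma.mk i ⁻¹' S) x y) :
    AvoidReach (expandG G M) S ⟨i, x⟩ ⟨i, y⟩ := by
  obtain ⟨w, hw⟩ := h
  induction w with
  | nil => exact AvoidReach.refl (hw _ (by simp))
  | cons hadj w ih =>
    exact (AvoidReach.of_adj (expandG_adj_mk_mk.2 hadj) (hw _ (by simp)) (hw _ (by simp))).trans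
      (ih fun z hz => hw z (by simp [hz]))

lemma avoidReach_of_expandG_walk {i : Fin k} {S : Set (Σ j, V j)}
    (hN : setNbhd (expandG G M) (modSet i) ⊆ S) {a b : Σ j, V j} (w : (expandG G M).Walk a b)
    (hw : ∀ z ∈ w.support, z ∉ S) {x y : V i} (ha : a = ⟨i, x⟩) (hb : b = ⟨i, y⟩) :
    AvoidReach (M i) (Sigma.mk i ⁻¹' S) x y := by
  induction w generalizing x with
  | nil =>
    subst ha
    obtain rfl : x = y := by simpa using hb
    exact AvoidReach.refl (hw _ (by simp))
  | @cons a c b hadj w ih =>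
    subst ha
    have hc : c ∉ S := hw c (by simp)
    obtain ⟨j, z⟩ := c
    have hz : (⟨j, z⟩ : Σ j, V j) ∈ modSet i := mem_of_adj_of_setNbhd_subset hN hadj.symm rfl hc
    obtain rfl : j = i := hz
    exact (AvoidReach.of_adj (expandG_adj_mk_mk.1 hadj) (hw _ (by simp)) hc).trans
      (ih (fun t ht => hw t (by simp [ht])) rfl hb)

lemma avoidReach_expandG_mk_iff {i : Fin k} {S : Set (Σ j, V j)}
    (hN : setNbhd (expandG G M) (modSet i) ⊆ S) {x y : V i} :
    AvoidReach (expandG G M) S ⟨i, x⟩ ⟨i, y⟩ ↔ AvoidReach (M i) (Sigma.mk i ⁻¹' S) x y :=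
  ⟨fun ⟨w, hw⟩ => avoidReach_of_expandG_walk hN w hw rfl rfl, AvoidReach.expandG_mk⟩

variable {S : Set (Σ j, V j)} {u v s₀ p : Σ j, V j} {i : Fin k}

lemma IsMinSep.setNbhd_modSet_subset (hS : IsMinSep (expandG G M) S u v) (hs₀S : s₀ ∈ S)
    (hs₀ : s₀ ∈ modSet i) (hp : p ∈ modSet i) (hpS : p ∉ S) :
    setNbhd (expandG G M) (modSet i) ⊆ S := by
  intro x ⟨hx, b, hb, hxb⟩
  by_contra hxS
  have reach_p : ∀ c, (expandG G M).Adj c s₀ → c ∉ S → AvoidReach (expandG G M) S c p := by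
    intro c hc hcS
    by_cases hci : c ∈ modSet i
    · have hxc := expandG_adj_of_adj_of_mem_modSet hx hb hci hxb
      have hxp := expandG_adj_of_adj_of_mem_modSet hx hb hp hxb
      exact (AvoidReach.of_adj hxc.symm hcS hxS).trans (AvoidReach.of_adj hxp hxS hpS)
    · exact AvoidReach.of_adj (expandG_adj_of_adj_of_mem_modSet hci hs₀ hp hc) hcS hpS
  obtain ⟨c, huc, hc⟩ := hS.exists_adj_of_mem hs₀S
  obtain ⟨d, hvd, hd⟩ := hS.symm.exists_adj_of_mem hs₀S
  exact hS.1.2.2 <| ((huc.trans (reach_p c hc huc.right_notMem)).trans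
    (reach_p d hd hvd.right_notMem).symm).trans hvd.symm

lemma IsMinSep.exists_avoidReach_mk (hS : IsMinSep (expandG G M) S u v)
    (hN : setNbhd (expandG G M) (modSet i) ⊆ S) (hs₀S : s₀ ∈ S) (hs₀ : s₀ ∈ modSet i) :
    ∃ c : V i, AvoidReach (expandG G M) S u ⟨i, c⟩ := by
  obtain ⟨⟨j, c⟩, huc, hc⟩ := hS.exists_adj_of_mem hs₀S
  have hj : (⟨j, c⟩ : Σ j, V j) ∈ modSet i :=
    mem_of_adj_of_setNbhd_subset hN hc hs₀ huc.right_notMem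
  obtain rfl : j = i := hj
  exact ⟨c, huc⟩

lemma IsMinSep.sdiff_modSet_eq_setNbhd (hS : IsMinSep (expandG G M) S u v)
    (hN : setNbhd (expandG G M) (modSet i) ⊆ S) (hs₀S : s₀ ∈ S) (hs₀ : s₀ ∈ modSet i) :
    S \ modSet i = setNbhd (expandG G M) (modSet i) := by
  refine Set.Subset.antisymm ?_ fun x hx => ⟨hN hx, hx.1⟩
  rintro x ⟨hxS, hx⟩
  obtain ⟨c, huc⟩ := hS.exists_avoidReach_mk hN hs₀S hs₀
  obtain ⟨c', huc', hc'x⟩ := hS.exists_adj_of_mem hxS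
  exact ⟨hx, c', (huc.symm.trans huc').mem_of_setNbhd_subset hN rfl, hc'x.symm⟩

lemma IsMinSep.isMinimalSeparator_preimage_mk (hS : IsMinSep (expandG G M) S u v)
    (hN : setNbhd (expandG G M) (modSet i) ⊆ S) (hs₀S : s₀ ∈ S) (hs₀ : s₀ ∈ modSet i) :
    IsMinimalSeparator (M i) (Sigma.mk i ⁻¹' S) := by
  obtain ⟨c, huc⟩ := hS.exists_avoidReach_mk hN hs₀S hs₀
  obtain ⟨d, hvd⟩ := hS.symm.exists_avoidReach_mk hN hs₀S hs₀
  refine ⟨c, d, ⟨huc.right_notMem, hvd.right_notMem, fun hcd => ?_⟩, ?_⟩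
  · exact hS.1.2.2 ((huc.trans hcd.expandG_mk).trans hvd.symm)
  rintro T hT ⟨-, -, hcd⟩
  -- shrink `S` inside the module only, so that `N(V i)` is still separated off
  set S' : Set (Σ j, V j) := S \ modSet i ∪ Sigma.mk i '' T
  have hS'S : S' ⊆ S := Set.union_subset Set.sdiff_subset (Set.image_subset_iff.2 hT.1)
  have hS'ssub : S' ⊂ S := by
    refine ⟨hS'S, fun hSS' => ?_⟩
    obtain ⟨t, htS, htT⟩ := Set.exists_of_ssubset hT
    rcases hSS' htS with ⟨-, ht⟩ | ⟨t', ht'T, ht'⟩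
    · exact ht rfl
    · exact htT (sigma_mk_injective ht' ▸ ht'T)
  have hN' : setNbhd (expandG G M) (modSet i) ⊆ S' := fun z hz => Or.inl ⟨hN hz, hz.1⟩
  have huv : AvoidReach (expandG G M) S' u v := by
    by_contra huv
    exact hS.2 S' hS'ssub ⟨fun h => hS.1.1 (hS'S h), fun h => hS.1.2.1 (hS'S h), huv⟩
  have hpre : Sigma.mk i ⁻¹' S' = T := by
    ext t
    simp [S', modSet]
  apply hcd
  rw [← hpre, ← avoidReach_expandG_mk_iff hN']
  exact ((huc.mono hS'S).symm.trans huv).trans (hvd.mono hS'S)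

end Expand

theorem statement_8_general {k : ℕ} {V : Fin k → Type}
    (G : SimpleGraph (Fin k)) (M : ∀ i, SimpleGraph (V i))
    (S : Set (Σ i, V i)) (hS : IsMinimalSeparator (expandG G M) S)
    (i : Fin k) (hint : (S ∩ modSet i).Nonempty) (hnsub : ¬ modSet i ⊆ S) :
    (∀ C, IsFullCompOf (expandG G M) S C → (C ∩ modSet i).Nonempty) ∧
      IsMinimalSeparator (M i) (Sigma.mk i ⁻¹' S) ∧
      S \ modSet i = setNbhd (expandG G M) (modSet i) := by
  obtain ⟨u, v, hS⟩ := hS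
  obtain ⟨s₀, hs₀S, hs₀⟩ := hint
  obtain ⟨p, hp, hpS⟩ := Set.not_subset.1 hnsub
  have hN := hS.setNbhd_modSet_subset hs₀S hs₀ hp hpS
  refine ⟨?_, hS.isMinimalSeparator_preimage_mk hN hs₀S hs₀,
    hS.sdiff_modSet_eq_setNbhd hN hs₀S hs₀⟩
  rintro C ⟨⟨v₀, -, rfl⟩, hC⟩
  rw [← hC] at hs₀S
  obtain ⟨-, e, he, hs₀e⟩ := hs₀S
  exact ⟨e, he, mem_of_adj_of_setNbhd_subset hN hs₀e.symm hs₀ he.right_notMem⟩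

theorem statement_8 {k : ℕ} {V : Fin k → Type} [∀ i, Fintype (V i)]
    (G : SimpleGraph (Fin k)) (M : ∀ i, SimpleGraph (V i))
    (S : Set (Σ i, V i)) (hS : IsMinimalSeparator (expandG G M) S)
    (i : Fin k) (hint : (S ∩ modSet i).Nonempty) (hnsub : ¬ modSet i ⊆ S) :
    (∀ C, IsFullCompOf (expandG G M) S C → (C ∩ modSet i).Nonempty) ∧
      IsMinimalSeparator (M i) (Sigma.mk i ⁻¹' S) ∧
      S \ modSet i = setNbhd (expandG G M) (modSet i) :=
  statement_8_general G M S hS i hint hnsub
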